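/- Combined auxiliary bound: Let Δ, μ > 0, let j ≥ 1 be an integer, and let Y_i : ℝⁿ × ℝ^m → ℝ (i = 1,…,j) be continuous functions satisfying: for each k ∈ {1,…,j}, whenever (z,ψ) ∈ B(Δ) × B(μ) and Y_i(z,ψ) = 0 for all i ∈ {1,…,k−1}, then Y_k(z,ψ) ≤ 0; and whenever (z,ψ) ∈ B(Δ) × B(μ) and Y_i(z,ψ) = 0 for all i ∈ {1,…,j}, then z = 0. Then for each δ ∈ (0,Δ] there exist ε > 0 and positive real numbers K₁,…,K_{j−1} such that, for all (z,ψ) ∈ H(δ,Δ) × B(μ), the combined function Z(z,ψ) := ∑_{i=1}^{j−1} K_i Y_i(z,ψ) + Y_j(z,ψ) satisfies Z(z,ψ) ≤ −ε/2^{j−1}. -/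

import Mathlib

noncomputable section

lemma exists_neg_bound' {X : Type*} [TopologicalSpace X] {K : Set X}
    (hK : IsCompact K) {f : X → ℝ} (hf : ContinuousOn f K)
    (h : ∀ x ∈ K, f x < 0) : ∃ ε : ℝ, 0 < ε ∧ ∀ x ∈ K, f x ≤ -ε := by
  rcases K.eq_empty_or_nonempty with rfl | hne
  · exact ⟨1, one_pos, by simp⟩
  · obtain ⟨x₀, hx₀, hmax⟩ := hK.exists_isMaxOn hne hf
    refine ⟨-f x₀, by linarith [h x₀ hx₀], fun x hx => ?_⟩
    have := (isMaxOn_iff.mp hmax) x hx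
    linarith

lemma exists_upper_bound' {X : Type*} [TopologicalSpace X] {K : Set X}
    (hK : IsCompact K) {f : X → ℝ} (hf : ContinuousOn f K) :
    ∃ M : ℝ, 0 ≤ M ∧ ∀ x ∈ K, f x ≤ M := by
  rcases K.eq_empty_or_nonempty with rfl | hne
  · exact ⟨0, le_refl _, by simp⟩
  · obtain ⟨x₀, hx₀, hmax⟩ := hK.exists_isMaxOn hne hf
    exact ⟨max (f x₀) 0, le_max_right _ _, fun x hx =>
      le_trans ((isMaxOn_iff.mp hmax) x hx) (le_max_left _ _)⟩

/-- **Combined auxiliary bound** (equation (9) in the proof of the extended Matrosov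
theorem): there exist `ε > 0` and positive constants `K₁,…,K_{j-1}` such that
`Z = ∑_{i=1}^{j-1} Kᵢ Yᵢ + Y_j ≤ -ε/2^{j-1}` on `H(δ,Δ) × B(μ)`. Indices are
zero-based: `Y ⟨i⟩` corresponds to `Y_{i+1}`. -/
theorem combined_auxiliary_bound (n m j : ℕ) (hj : 1 ≤ j) (Δ μ : ℝ)
    (hΔ : 0 < Δ) (hμ : 0 < μ)
    (Y : Fin j → (Fin n → ℝ) → (Fin m → ℝ) → ℝ)
    (hYcont : ∀ i, Continuous fun q : (Fin n → ℝ) × (Fin m → ℝ) => Y i q.1 q.2)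
    -- Assumption 3: nested sign condition
    (h3 : ∀ k : Fin j, ∀ (z : Fin n → ℝ) (ψ : Fin m → ℝ), ‖z‖ ≤ Δ → ‖ψ‖ ≤ μ →
      (∀ i, i < k → Y i z ψ = 0) → Y k z ψ ≤ 0)
    -- Assumption 4: joint definiteness
    (h4 : ∀ (z : Fin n → ℝ) (ψ : Fin m → ℝ), ‖z‖ ≤ Δ → ‖ψ‖ ≤ μ →
      (∀ i, Y i z ψ = 0) → z = 0) :
    ∀ δ : ℝ, 0 < δ → δ ≤ Δ → ∃ ε : ℝ, 0 < ε ∧ ∃ K : Fin j → ℝ, (∀ i, 0 < K i) ∧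
      ∀ (z : Fin n → ℝ) (ψ : Fin m → ℝ), δ ≤ ‖z‖ → ‖z‖ ≤ Δ → ‖ψ‖ ≤ μ →
        (∑ i ∈ Finset.univ.filter (fun i : Fin j => i.val + 1 < j), K i * Y i z ψ) +
            Y ⟨j - 1, by omega⟩ z ψ ≤
          -ε / 2 ^ (j - 1) := by
  intro δ hδ hδΔ
  -- The compact region S = H(δ,Δ) × B(μ)
  set Sset : Set ((Fin n → ℝ) × (Fin m → ℝ)) :=
    {q | δ ≤ ‖q.1‖ ∧ ‖q.1‖ ≤ Δ ∧ ‖q.2‖ ≤ μ} with hSset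
  have hSclosed : IsClosed Sset := by
    rw [hSset]
    rw [Set.setOf_and, Set.setOf_and]
    exact (isClosed_le continuous_const continuous_fst.norm).inter
      ((isClosed_le continuous_fst.norm continuous_const).inter
        (isClosed_le continuous_snd.norm continuous_const))
  have hScomp : IsCompact Sset := by
    apply Metric.isCompact_of_isClosed_isBounded hSclosed
    apply (Metric.isBounded_closedBall (x := (0 : (Fin n → ℝ) × (Fin m → ℝ)))
      (r := max Δ μ)).subset
    intro q hq
    rw [Metric.mem_closedBall, dist_zero_right, Prod.norm_def]
    exact max_le_max hq.2.1 hq.2.2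
  -- compactness of the nested zero-level sets
  have hCcomp : ∀ t : ℕ, IsCompact (Sset ∩ {q | ∀ i : Fin j, i.val < t → Y i q.1 q.2 = 0}) := by
    intro t
    apply hScomp.inter_right
    have : {q : (Fin n → ℝ) × (Fin m → ℝ) | ∀ i : Fin j, i.val < t → Y i q.1 q.2 = 0}
        = ⋂ i : Fin j, ⋂ _ : i.val < t, {q | Y i q.1 q.2 = 0} := by
      ext q; simp
    rw [this]
    exact isClosed_iInter fun i => isClosed_iInter fun _ =>
      isClosed_eq (hYcont i) continuous_const
  -- main downward induction
  have main : ∀ d : ℕ, d < j → ∃ ε : ℝ, 0 < ε ∧ ∃ K : Fin j → ℝ, (∀ i, 0 < K i) ∧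
      ∀ (z : Fin n → ℝ) (ψ : Fin m → ℝ), δ ≤ ‖z‖ → ‖z‖ ≤ Δ → ‖ψ‖ ≤ μ →
        (∀ i : Fin j, i.val < j - 1 - d → Y i z ψ = 0) →
        (∑ i ∈ Finset.univ.filter (fun i : Fin j => j - 1 - d ≤ i.val ∧ i.val + 1 < j),
            K i * Y i z ψ) + Y ⟨j - 1, by omega⟩ z ψ ≤ -ε / 2 ^ d := by
    intro d
    induction d with
    | zero =>
      intro _
      set C₀ := Sset ∩ {q | ∀ i : Fin j, i.val < j - 1 → Y i q.1 q.2 = 0} with hC₀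
      have hneg : ∀ q ∈ C₀, Y ⟨j - 1, by omega⟩ q.1 q.2 < 0 := by
        rintro q ⟨⟨hq1, hq2, hq3⟩, hq4⟩
        have hle : Y ⟨j - 1, by omega⟩ q.1 q.2 ≤ 0 := by
          refine h3 _ q.1 q.2 hq2 hq3 (fun i hi => hq4 i ?_)
          exact hi
        rcases hle.lt_or_eq with h | h
        · exact h
        · exfalso
          have hall : ∀ i : Fin j, Y i q.1 q.2 = 0 := by
            intro i
            rcases lt_or_ge i.val (j - 1) with hi | hi
            · exact hq4 i hi
            · have : i = ⟨j - 1, by omega⟩ :=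
                Fin.ext (show i.val = j - 1 from by have := i.isLt; omega)
              rw [this]; exact h
          have := h4 q.1 q.2 hq2 hq3 hall
          rw [this] at hq1
          simp at hq1
          linarith
      obtain ⟨ε, hε, hεb⟩ := exists_neg_bound' (hCcomp (j - 1))
        ((hYcont ⟨j - 1, by omega⟩).continuousOn) hneg
      refine ⟨ε, hε, fun _ => 1, fun _ => one_pos, ?_⟩
      intro z ψ hz1 hz2 hψ hvan
      have hfe : Finset.univ.filter
          (fun i : Fin j => j - 1 - 0 ≤ i.val ∧ i.val + 1 < j) = ∅ := by
        ext i
        simp only [Finset.mem_filter, Finset.mem_univ, true_and, Finset.notMem_empty,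
          iff_false]
        omega
      rw [hfe, Finset.sum_empty, zero_add]
      have := hεb (z, ψ) ⟨⟨hz1, hz2, hψ⟩, fun i hi => hvan i (by simpa using hi)⟩
      simpa using this
    | succ d ih =>
      intro hd1
      obtain ⟨ε, hε, K, hK, hIH⟩ := ih (by omega)
      set kf : Fin j := ⟨j - 1 - (d + 1), by omega⟩ with hkf
      set Zd : ((Fin n → ℝ) × (Fin m → ℝ)) → ℝ := fun q =>
        (∑ i ∈ Finset.univ.filter (fun i : Fin j => j - 1 - d ≤ i.val ∧ i.val + 1 < j),
          K i * Y i q.1 q.2) + Y ⟨j - 1, by omega⟩ q.1 q.2 with hZd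
      have hZcont : Continuous Zd :=
        (continuous_finset_sum _ fun i _ => continuous_const.mul (hYcont i)).add
          (hYcont ⟨j - 1, by omega⟩)
      set C := Sset ∩ {q | ∀ i : Fin j, i.val < j - 1 - (d + 1) → Y i q.1 q.2 = 0} with hC
      have hCc : IsCompact C := hCcomp (j - 1 - (d + 1))
      have hYkC : ∀ q ∈ C, Y kf q.1 q.2 ≤ 0 := by
        rintro q ⟨⟨_, h2', h3'⟩, h4'⟩
        exact h3 kf q.1 q.2 h2' h3' (fun i hi => h4' i hi)
      have hIH' : ∀ q ∈ C, Y kf q.1 q.2 = 0 → Zd q ≤ -ε / 2 ^ d := by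
        rintro q ⟨⟨h1', h2', h3'⟩, h4'⟩ hk0
        refine hIH q.1 q.2 h1' h2' h3' (fun i hi => ?_)
        rcases lt_or_ge i.val (j - 1 - (d + 1)) with hlt | hge
        · exact h4' i hlt
        · have : i = kf := Fin.ext (show i.val = j - 1 - (d + 1) from by omega)
          rw [this]; exact hk0
      set D := C ∩ {q | -ε / 2 ^ (d + 1) ≤ Zd q} with hD
      have hDc : IsCompact D := hCc.inter_right (isClosed_le continuous_const hZcont)
      have hstep : (-ε : ℝ) / 2 ^ d < -ε / 2 ^ (d + 1) := by
        rw [neg_div, neg_div, neg_lt_neg_iff]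
        exact div_lt_div_of_pos_left hε (by positivity) (by
          rw [pow_succ]; nlinarith [pow_pos (by norm_num : (0:ℝ) < 2) d])
      have hDneg : ∀ q ∈ D, Y kf q.1 q.2 < 0 := by
        rintro q ⟨hqC, hqZ⟩
        rcases (hYkC q hqC).lt_or_eq with h | h
        · exact h
        · exfalso
          have := hIH' q hqC h
          have hqZ' : -ε / 2 ^ (d + 1) ≤ Zd q := hqZ
          linarith
      obtain ⟨ρ, hρ, hρb⟩ := exists_neg_bound' hDc ((hYcont kf).continuousOn) hDneg
      obtain ⟨M, hM0, hMb⟩ := exists_upper_bound' hScomp hZcont.continuousOn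
      set c : ℝ := (M + ε / 2 ^ (d + 1)) / ρ with hc
      have hcpos : 0 < c := div_pos (by positivity) hρ
      refine ⟨ε, hε, Function.update K kf c, ?_, ?_⟩
      · intro i
        rw [Function.update_apply]
        split
        · exact hcpos
        · exact hK i
      intro z ψ hz1 hz2 hψ hvan
      have hqC : ((z, ψ) : (Fin n → ℝ) × (Fin m → ℝ)) ∈ C :=
        ⟨⟨hz1, hz2, hψ⟩, fun i hi => hvan i hi⟩
      have hsplit : Finset.univ.filter
            (fun i : Fin j => j - 1 - (d + 1) ≤ i.val ∧ i.val + 1 < j)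
          = insert kf (Finset.univ.filter
            (fun i : Fin j => j - 1 - d ≤ i.val ∧ i.val + 1 < j)) := by
        ext i
        have hi := i.isLt
        simp only [Finset.mem_filter, Finset.mem_univ, true_and, Finset.mem_insert,
          Fin.ext_iff, hkf]
        omega
      have hnotmem : kf ∉ Finset.univ.filter
          (fun i : Fin j => j - 1 - d ≤ i.val ∧ i.val + 1 < j) := by
        simp only [Finset.mem_filter, Finset.mem_univ, true_and, hkf]
        omega
      rw [hsplit, Finset.sum_insert hnotmem]
      have hrest : ∑ i ∈ Finset.univ.filter
            (fun i : Fin j => j - 1 - d ≤ i.val ∧ i.val + 1 < j),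
            Function.update K kf c i * Y i z ψ
          = ∑ i ∈ Finset.univ.filter
            (fun i : Fin j => j - 1 - d ≤ i.val ∧ i.val + 1 < j), K i * Y i z ψ := by
        refine Finset.sum_congr rfl (fun i hi => ?_)
        simp only [Finset.mem_filter, Finset.mem_univ, true_and] at hi
        rw [Function.update_of_ne]
        intro h
        rw [h] at hi
        simp only [hkf] at hi
        omega
      rw [hrest, Function.update_self]
      have hZval : Zd (z, ψ) = (∑ i ∈ Finset.univ.filter
          (fun i : Fin j => j - 1 - d ≤ i.val ∧ i.val + 1 < j), K i * Y i z ψ)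
          + Y ⟨j - 1, by omega⟩ z ψ := rfl
      by_cases hcase : Zd (z, ψ) ≤ -ε / 2 ^ (d + 1)
      · have hk0 : Y kf z ψ ≤ 0 := hYkC _ hqC
        have : c * Y kf z ψ ≤ 0 := mul_nonpos_of_nonneg_of_nonpos hcpos.le hk0
        rw [hZval] at hcase
        linarith
      · have hqD : ((z, ψ) : (Fin n → ℝ) × (Fin m → ℝ)) ∈ D :=
          ⟨hqC, le_of_lt (not_le.mp hcase)⟩
        have h1 : Y kf z ψ ≤ -ρ := hρb _ hqD
        have h2 : Zd (z, ψ) ≤ M := hMb _ hqC.1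
        have h3' : c * Y kf z ψ ≤ c * (-ρ) := mul_le_mul_of_nonneg_left h1 hcpos.le
        have h4' : c * (-ρ) = -(M + ε / 2 ^ (d + 1)) := by
          rw [mul_neg, hc]
          field_simp
        rw [hZval] at h2
        have he' : -ε / 2 ^ (d + 1) = -(ε / 2 ^ (d + 1)) := by ring
        rw [he']
        linarith
  obtain ⟨ε, hε, K, hK, hmain⟩ := main (j - 1) (by omega)
  refine ⟨ε, hε, K, hK, ?_⟩
  intro z ψ hz1 hz2 hψ
  have hfeq : Finset.univ.filter
        (fun i : Fin j => j - 1 - (j - 1) ≤ i.val ∧ i.val + 1 < j)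
      = Finset.univ.filter (fun i : Fin j => i.val + 1 < j) := by
    ext i
    simp only [Finset.mem_filter, Finset.mem_univ, true_and]
    omega
  have := hmain z ψ hz1 hz2 hψ (fun i hi => absurd hi (by omega))
  rwa [hfeq] at this
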